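/- arXiv:math/0610282 — 2 statements merged into one kernel-verified Lean document; each statement's English description precedes it below -/
import Mathlib

section
/- Let M, N, K be elements of a von Neumann algebra A with M, N dissipative and invertible, and suppose the Schur complement M - K*N⁻¹K is invertible. Then N - KM⁻¹K* is also invertible, and its inverse satisfies (N - KM⁻¹K*)⁻¹ = N⁻¹ + N⁻¹K (M - K*N⁻¹K)⁻¹ K* N⁻¹. -/
open Complex

variable {H : Type*} [NormedAddCommGroup H] [InnerProductSpace ℂ H] [CompleteSpace H]

/-- `M` is dissipative: `Im ⟪x, M x⟫ ≥ 0` for all `x`. -/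
def IsDissipative (M : H →L[ℂ] H) : Prop := ∀ x : H, 0 ≤ (inner ℂ x (M x) : ℂ).im

/-!
The identity is the ring-theoretic Woodbury formula for the two Schur complements of the block
matrix `[[M, L], [K, N]]`, valid in any ring with `L` in place of `K*`. Writing `a = M⁻¹`,
`b = N⁻¹` and `s` for the inverse of `S = M - L b K`, the product of `N - K a L` with
`b + b K s L b` collapses to `1` once `L b K` is replaced by `M - S`; the reverse product is the
same computation in the opposite ring.
-/

section Woodbury

variable {R : Type*} [Ring R] {M N K L a b s : R}

theorem schur_complement_mul_woodbury_eq_one (haM : a * M = 1) (hNb : N * b = 1)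
    (hSs : (M - L * b * K) * s = 1) :
    (N - K * a * L) * (b + b * K * s * L * b) = 1 := by
  have hKaLbKs : K * a * (L * b * K) * s = K * s - K * a :=
    calc K * a * (L * b * K) * s = K * (a * M) * s - K * a * ((M - L * b * K) * s) := by
          noncomm_ring
      _ = K * s - K * a := by rw [haM, hSs]; noncomm_ring
  calc (N - K * a * L) * (b + b * K * s * L * b)
      = N * b + N * b * (K * s * L * b) - K * a * L * b - K * a * (L * b * K) * s * (L * b) := by
        noncomm_ring
    _ = 1 := by rw [hNb, hKaLbKs]; noncomm_ring

theorem woodbury_mul_schur_complement_eq_one (hMa : M * a = 1) (hbN : b * N = 1)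
    (hsS : s * (M - L * b * K) = 1) :
    (b + b * K * s * L * b) * (N - K * a * L) = 1 := by
  apply MulOpposite.op_injective
  have hop := schur_complement_mul_woodbury_eq_one (R := Rᵐᵒᵖ) (M := .op M) (N := .op N)
    (K := .op L) (L := .op K) (a := .op a) (b := .op b) (s := .op s)
    (by rw [← MulOpposite.op_mul, hMa, MulOpposite.op_one])
    (by rw [← MulOpposite.op_mul, hbN, MulOpposite.op_one])
    (by simpa only [MulOpposite.op_mul, MulOpposite.op_sub, MulOpposite.op_one, mul_assoc]
          using congrArg MulOpposite.op hsS)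
  simpa only [MulOpposite.op_mul, MulOpposite.op_sub, MulOpposite.op_add, MulOpposite.op_one,
    mul_assoc] using hop

theorem isUnit_schur_complement_and_inverse_eq (hM : IsUnit M) (hN : IsUnit N)
    (hS : IsUnit (M - L * Ring.inverse N * K)) :
    IsUnit (N - K * Ring.inverse M * L) ∧
    Ring.inverse (N - K * Ring.inverse M * L) =
      Ring.inverse N + Ring.inverse N * K * Ring.inverse (M - L * Ring.inverse N * K) * L *
        Ring.inverse N := by
  let u : Rˣ :=
    ⟨_, _, schur_complement_mul_woodbury_eq_one (Ring.inverse_mul_cancel M hM)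
        (Ring.mul_inverse_cancel N hN) (Ring.mul_inverse_cancel _ hS),
      woodbury_mul_schur_complement_eq_one (Ring.mul_inverse_cancel M hM)
        (Ring.inverse_mul_cancel N hN) (Ring.inverse_mul_cancel _ hS)⟩
  exact ⟨u.isUnit, Ring.inverse_unit u⟩

end Woodbury

theorem schur_complement_inverse_general (M N K : H →L[ℂ] H)
    (hMinv : IsUnit M) (hNinv : IsUnit N)
    (hS : IsUnit (M - star K * Ring.inverse N * K)) :
    IsUnit (N - K * Ring.inverse M * star K) ∧
    Ring.inverse (N - K * Ring.inverse M * star K) =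
      Ring.inverse N +
        Ring.inverse N * K * Ring.inverse (M - star K * Ring.inverse N * K) *
          star K * Ring.inverse N :=
  isUnit_schur_complement_and_inverse_eq hMinv hNinv hS

/-- Let `M`, `N` be invertible dissipative operators and `K` arbitrary, and suppose
the Schur complement `M - K*N⁻¹K` is invertible.  Then `N - KM⁻¹K*` is invertible and
`(N - KM⁻¹K*)⁻¹ = N⁻¹ + N⁻¹ K (M - K*N⁻¹K)⁻¹ K* N⁻¹`. -/
theorem schur_complement_inverse (M N K : H →L[ℂ] H)
    (hM : IsDissipative M) (hN : IsDissipative N)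
    (hMinv : IsUnit M) (hNinv : IsUnit N)
    (hS : IsUnit (M - star K * Ring.inverse N * K)) :
    IsUnit (N - K * Ring.inverse M * star K) ∧
    Ring.inverse (N - K * Ring.inverse M * star K) =
      Ring.inverse N +
        Ring.inverse N * K * Ring.inverse (M - star K * Ring.inverse N * K) *
          star K * Ring.inverse N :=
  schur_complement_inverse_general M N K hMinv hNinv hS
end

section
/- Let z ↦ F(z) = N - K(M + zI)⁻¹K* be defined for z in the upper half-plane, where M is dissipative, N is dissipative and invertible, and K is arbitrary. Then F is an operator-valued Herglotz function (Im F(z) ≥ 0) and F(z) is boundedly invertible for every z in the open upper half-plane. -/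
open Complex

variable {H : Type*} [NormedAddCommGroup H] [InnerProductSpace ℂ H] [CompleteSpace H]

/-!
Write `A = M + z` and `F = N - K A⁻¹ K*`. If `T` is dissipative and invertible then so is
`-T⁻¹` (for `x = T y`, `Im ⟪x, -T⁻¹ x⟫ = Im ⟪y, T y⟫`), and dissipativity is preserved by
`T ↦ K T K*` and by sums; hence `F = N + K (-A⁻¹) K*` is dissipative.
For invertibility, Jacobson's lemma (`1 - xy` is invertible iff `1 - yx` is) shows that the two
Schur complements `N - K A⁻¹ K*` and `A - K* N⁻¹ K` are invertible together. The latter is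
`(M + K* (-N⁻¹) K) + z` with `M + K* (-N⁻¹) K` dissipative, so `Im ⟪x, · x⟫ ≥ Im z ‖x‖²`
and it is invertible by coercivity.
-/

theorem isUnit_one_sub_mul_comm {R : Type*} [Ring R] {x y : R} :
    IsUnit (1 - x * y) ↔ IsUnit (1 - y * x) := by
  suffices h : ∀ x y : R, IsUnit (1 - x * y) → IsUnit (1 - y * x) from ⟨h x y, h y x⟩
  intro x y ⟨u, hu⟩
  refine ⟨⟨1 - y * x, 1 + y * ↑u⁻¹ * x, ?_, ?_⟩, rfl⟩
  · calc (1 - y * x) * (1 + y * ↑u⁻¹ * x) = 1 - y * x + y * ((1 - x * y) * ↑u⁻¹) * x := by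
          noncomm_ring
      _ = 1 := by rw [← hu, Units.mul_inv, mul_one, sub_add_cancel]
  · calc (1 + y * ↑u⁻¹ * x) * (1 - y * x) = 1 - y * x + y * (↑u⁻¹ * (1 - x * y)) * x := by
          noncomm_ring
      _ = 1 := by rw [← hu, Units.inv_mul, mul_one, sub_add_cancel]

theorem isUnit_sub_mul_inverse_mul_iff {R : Type*} [Ring R] {a n : R} (ha : IsUnit a)
    (hn : IsUnit n) (b c : R) :
    IsUnit (n - c * Ring.inverse a * b) ↔ IsUnit (a - b * Ring.inverse n * c) := by
  have factor : ∀ {p : R}, IsUnit p → ∀ q : R,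
      p - q = p * (1 - Ring.inverse p * q) := fun hp q => by
    rw [mul_sub, mul_one, ← mul_assoc, Ring.mul_inverse_cancel _ hp, one_mul]
  rw [factor hn, factor ha, hn.mul_left_iff, ha.mul_left_iff]
  simpa only [mul_assoc] using
    isUnit_one_sub_mul_comm (x := Ring.inverse n * c) (y := Ring.inverse a * b)

namespace IsDissipative

variable {E : Type*} [NormedAddCommGroup E] [InnerProductSpace ℂ E]

theorem add {S T : E →L[ℂ] E} (hS : IsDissipative S) (hT : IsDissipative T) :
    IsDissipative (S + T) := fun x => by
  simpa only [add_apply, inner_add_right, add_im] using add_nonneg (hS x) (hT x)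

theorem mul_mul_star [CompleteSpace E] {T : E →L[ℂ] E} (hT : IsDissipative T) (K : E →L[ℂ] E) :
    IsDissipative (K * T * star K) := fun x => by
  rw [mul_apply_eq_comp, mul_apply_eq_comp, ContinuousLinearMap.star_eq_adjoint,
    ← ContinuousLinearMap.adjoint_inner_left]
  exact hT _

theorem neg_inverse {T : E →L[ℂ] E} (hT : IsDissipative T) (hu : IsUnit T) :
    IsDissipative (-Ring.inverse T) := fun x => by
  obtain ⟨y, rfl⟩ : ∃ y, T y = x := ⟨Ring.inverse T x, by
    rw [← mul_apply_eq_comp, Ring.mul_inverse_cancel _ hu, one_apply_eq_self]⟩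
  have hy : Ring.inverse T (T y) = y := by
    rw [← mul_apply_eq_comp, Ring.inverse_mul_cancel _ hu, one_apply_eq_self]
  rw [neg_apply, hy, inner_neg_right, neg_im, ← inner_conj_symm, conj_im, neg_neg]
  exact hT y

theorem im_inner_add_smul_one {T : E →L[ℂ] E} (hT : IsDissipative T) (z : ℂ) (x : E) :
    z.im * ‖x‖ ^ 2 ≤ (inner ℂ x ((T + z • 1) x) : ℂ).im := by
  have hTx := hT x
  simp only [add_apply, smul_apply, one_apply_eq_self, inner_add_right, inner_smul_right,
    inner_self_eq_norm_sq_to_K, add_im]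
  rw [RCLike.ofReal_eq_complex_ofReal, ← ofReal_pow, im_mul_ofReal]
  linarith

theorem add_smul_one {T : E →L[ℂ] E} (hT : IsDissipative T) {z : ℂ} (hz : 0 ≤ z.im) :
    IsDissipative (T + z • 1) := fun x =>
  (mul_nonneg hz (sq_nonneg _)).trans (hT.im_inner_add_smul_one z x)

theorem isUnit_add_smul_one [CompleteSpace E] {T : E →L[ℂ] E} (hT : IsDissipative T) {z : ℂ}
    (hz : 0 < z.im) : IsUnit (T + z • 1) := by
  refine (T + z • 1).isUnit_of_forall_le_norm_inner_map (c := ⟨z.im, hz.le⟩) hz fun x => ?_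
  calc ‖x‖ ^ 2 * z.im ≤ (inner ℂ x ((T + z • 1) x) : ℂ).im := by
        rw [mul_comm]; exact hT.im_inner_add_smul_one z x
    _ ≤ ‖(inner ℂ x ((T + z • 1) x) : ℂ)‖ := (le_abs_self _).trans (abs_im_le_norm _)
    _ = _ := by rw [← inner_conj_symm, RCLike.norm_conj]

end IsDissipative

/-- Let `F(z) = N - K (M + zI)⁻¹ K*` with `M` dissipative, `N` dissipative invertible,
`K` arbitrary.  Then `F` is an operator-valued Herglotz function: it is analytic on the
open upper half-plane, `Im F(z) ≥ 0` (i.e. `F(z)` is dissipative), and `F(z)` is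
boundedly invertible for every `z` in the open upper half-plane. -/
theorem herglotz_invertible (M N K : H →L[ℂ] H)
    (hM : IsDissipative M) (hN : IsDissipative N) (hNinv : IsUnit N) :
    DifferentiableOn ℂ (fun z : ℂ => N - K * Ring.inverse (M + z • 1) * star K)
      {z : ℂ | 0 < z.im} ∧
    ∀ z : ℂ, 0 < z.im →
      IsDissipative (N - K * Ring.inverse (M + z • 1) * star K) ∧
      IsUnit (N - K * Ring.inverse (M + z • 1) * star K) := by
  have hA : ∀ z : ℂ, 0 < z.im → IsUnit (M + z • 1) := fun z hz => hM.isUnit_add_smul_one hz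
  refine ⟨fun z hz => ?_, fun z hz => ⟨?_, ?_⟩⟩
  · have hAinv : DifferentiableAt ℂ (fun w : ℂ => Ring.inverse (M + w • 1)) z :=
      ((differentiableAt_const M).add (differentiableAt_id.smul_const 1)).inverse (hA z hz)
    exact ((differentiableAt_const N).sub
      (((differentiableAt_const K).mul hAinv).mul_const _)).differentiableWithinAt
  · rw [show N - K * Ring.inverse (M + z • 1) * star K
        = N + K * -Ring.inverse (M + z • 1) * star K by noncomm_ring]
    exact hN.add (((hM.add_smul_one hz.le).neg_inverse (hA z hz)).mul_mul_star K)
  · have hS : IsDissipative (M + star K * -Ring.inverse N * K) := by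
      simpa only [star_star] using hM.add ((hN.neg_inverse hNinv).mul_mul_star (star K))
    rw [isUnit_sub_mul_inverse_mul_iff (hA z hz) hNinv]
    convert hS.isUnit_add_smul_one hz using 1
    noncomm_ring
end
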